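/- arXiv:2204.01085 — 2 statements merged into one kernel-verified Lean document; each statement's English description precedes it below -/
import Mathlib

section
/- The group of collineations of the Hall affine plane A_H generated by all translations τ_{a,b} and all autotopisms σ_S acts transitively on the set of all type 2 lines, and acts transitively on the set of all vertical lines. -/
open Polynomial

/-- The Hall system multiplication on `F × F`, with defining polynomial `x^2 - r*x - s`. -/
def hallMul {F : Type*} [Field F] [DecidableEq F] (r s : F) (a b : F × F) : F × F :=
  if b.2 = 0 then (a.1 * b.1, a.2 * b.1)
  else (a.1 * b.1 - a.2 * b.2⁻¹ * (b.1 ^ 2 - r * b.1 - s),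
        a.1 * b.2 - a.2 * b.1 + a.2 * r)

/-- Vertical line `[c] = {(c, y)}` in the Hall affine plane. -/
def vertLine {F : Type*} (c : F × F) : Set ((F × F) × (F × F)) := {P | P.1 = c}

/-- Non-vertical line `[m, k] = {(x, x·m + k)}` in the Hall affine plane. -/
def slopeLine {F : Type*} [Field F] [DecidableEq F] (r s : F) (m k : F × F) :
    Set ((F × F) × (F × F)) :=
  {P | P.2 = hallMul r s P.1 m + k}

/-- The lines of the Hall affine plane `A_H`. -/
def IsHallLine {F : Type*} [Field F] [DecidableEq F] (r s : F)
    (ℓ : Set ((F × F) × (F × F))) : Prop :=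
  (∃ c : F × F, ℓ = vertLine c) ∨ ∃ m k : F × F, ℓ = slopeLine r s m k

/-- A collineation of the Hall affine plane: a bijection of the point set mapping
every line onto a line. -/
def IsCollineation {F : Type*} [Field F] [DecidableEq F] (r s : F)
    (φ : (F × F) × (F × F) → (F × F) × (F × F)) : Prop :=
  Function.Bijective φ ∧ ∀ ℓ, IsHallLine r s ℓ → IsHallLine r s (φ '' ℓ)

/-- The translation `τ_{a,b} : (x,y) ↦ (x + a, y + b)`. -/
def tauMap {F : Type*} [Field F] (a b : F × F) :
    (F × F) × (F × F) → (F × F) × (F × F) :=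
  fun P => (P.1 + a, P.2 + b)

/-- Right action of a `2 × 2` matrix on a row vector `x = (x₁, x₂)`. -/
def rmul {F : Type*} [Field F] (S : Matrix (Fin 2) (Fin 2) F) (x : F × F) : F × F :=
  (x.1 * S 0 0 + x.2 * S 1 0, x.1 * S 0 1 + x.2 * S 1 1)

/-- The autotopism `σ_S : (x,y) ↦ (xS, yS)`. -/
def sigmaMap {F : Type*} [Field F] (S : Matrix (Fin 2) (Fin 2) F) :
    (F × F) × (F × F) → (F × F) × (F × F) :=
  fun P => (rmul S P.1, rmul S P.2)

/-- The translations, as permutations of the point set. -/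
def TRperms (F : Type*) [Field F] : Set (Equiv.Perm ((F × F) × (F × F))) :=
  {g | ∃ a b : F × F, ⇑g = tauMap a b}

/-- The autotopisms, as permutations of the point set. -/
def ATPperms (F : Type*) [Field F] : Set (Equiv.Perm ((F × F) × (F × F))) :=
  {g | ∃ S : GL (Fin 2) F, ⇑g = sigmaMap (S : Matrix (Fin 2) (Fin 2) F)}

/-! Vertical lines are moved by the translations `τ_{a,0}`. For type 2 lines, the shears
`S = !![1, 0; t, u]` (`u ≠ 0`) satisfy `(x S)·(m S) = (x·m) S` whenever `m₂ ≠ 0`, so `σ_S` maps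
`[m, k]` onto `[m S, k S]`; the shears act transitively on the slopes with `m₂ ≠ 0`, and a
translation `τ_{0,b}` then adjusts `k`. -/

def tauPerm {F : Type*} [Field F] (a b : F × F) : Equiv.Perm ((F × F) × (F × F)) :=
  Equiv.prodCongr (Equiv.addRight a) (Equiv.addRight b)

lemma Equiv.Perm.image_eq_of_apply_mem_iff {α : Type*} (e : Equiv.Perm α) {A B : Set α}
    (h : ∀ P, e P ∈ B ↔ P ∈ A) : e '' A = B := by
  ext P
  rw [e.image_eq_preimage_symm, Set.mem_preimage, ← h, Equiv.apply_symm_apply]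

section Field

variable {F : Type*} [Field F]

lemma rmul_add (S : Matrix (Fin 2) (Fin 2) F) (x y : F × F) :
    rmul S (x + y) = rmul S x + rmul S y := by
  ext <;> simp only [rmul, Prod.fst_add, Prod.snd_add] <;> ring

lemma rmul_rmul (A B : Matrix (Fin 2) (Fin 2) F) (x : F × F) :
    rmul B (rmul A x) = rmul (A * B) x := by
  ext <;> simp only [rmul, Matrix.mul_apply, Fin.sum_univ_two] <;> ring

lemma rmul_one (x : F × F) : rmul (1 : Matrix (Fin 2) (Fin 2) F) x = x := by
  simp [rmul]

lemma rmul_inv_rmul (S : GL (Fin 2) F) (x : F × F) : rmul ↑S⁻¹ (rmul ↑S x) = x := by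
  rw [rmul_rmul, ← Matrix.GeneralLinearGroup.coe_mul, mul_inv_cancel,
    Matrix.GeneralLinearGroup.coe_one, rmul_one]

lemma rmul_rmul_inv (S : GL (Fin 2) F) (x : F × F) : rmul ↑S (rmul ↑S⁻¹ x) = x := by
  simpa using rmul_inv_rmul S⁻¹ x

lemma rmul_injective (S : GL (Fin 2) F) :
    Function.Injective (rmul (S : Matrix (Fin 2) (Fin 2) F)) :=
  Function.LeftInverse.injective (rmul_inv_rmul S)

def sigmaPerm (S : GL (Fin 2) F) : Equiv.Perm ((F × F) × (F × F)) where
  toFun := sigmaMap S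
  invFun := sigmaMap ↑S⁻¹
  left_inv P := by simp only [sigmaMap, rmul_inv_rmul]
  right_inv P := by simp only [sigmaMap, rmul_rmul_inv]

lemma tauPerm_mem_closure (a b : F × F) :
    tauPerm a b ∈ Subgroup.closure (TRperms F ∪ ATPperms F) :=
  Subgroup.subset_closure (Or.inl ⟨a, b, rfl⟩)

lemma sigmaPerm_mem_closure (S : GL (Fin 2) F) :
    sigmaPerm S ∈ Subgroup.closure (TRperms F ∪ ATPperms F) :=
  Subgroup.subset_closure (Or.inr ⟨S, rfl⟩)

lemma image_tauPerm_vertLine (a b c : F × F) :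
    tauPerm a b '' vertLine c = vertLine (c + a) :=
  Equiv.Perm.image_eq_of_apply_mem_iff _ fun _ => add_left_inj a

def shear (t u : F) : Matrix (Fin 2) (Fin 2) F := !![1, 0; t, u]

lemma rmul_shear (t u : F) (x : F × F) : rmul (shear t u) x = (x.1 + x.2 * t, x.2 * u) := by
  simp [rmul, shear]

lemma det_shear (t u : F) : (shear t u).det = u := by
  simp [shear, Matrix.det_fin_two_of]

lemma exists_shear_rmul_eq {m m' : F × F} (hm : m.2 ≠ 0) (hm' : m'.2 ≠ 0) :
    ∃ t u : F, u ≠ 0 ∧ rmul (shear t u) m = m' := by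
  refine ⟨(m'.1 - m.1) / m.2, m'.2 / m.2, div_ne_zero hm' hm, ?_⟩
  rw [rmul_shear]
  ext <;> field_simp
  ring

end Field

section Hall

variable {F : Type*} [Field F] [DecidableEq F] (r s : F)

lemma image_tauPerm_slopeLine (b m k : F × F) :
    tauPerm 0 b '' slopeLine r s m k = slopeLine r s m (k + b) := by
  refine Equiv.Perm.image_eq_of_apply_mem_iff _ fun P => ?_
  simp only [slopeLine, Set.mem_ofPred_eq, tauPerm, Equiv.prodCongr_apply, Prod.map,
    Equiv.coe_addRight, add_zero, ← add_assoc, add_left_inj]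

lemma image_sigmaPerm_slopeLine (S : GL (Fin 2) F) (m k : F × F)
    (hS : ∀ x, hallMul r s (rmul S x) (rmul S m) = rmul S (hallMul r s x m)) :
    sigmaPerm S '' slopeLine r s m k = slopeLine r s (rmul S m) (rmul S k) := by
  refine Equiv.Perm.image_eq_of_apply_mem_iff _ fun P => ?_
  change rmul S P.2 = hallMul r s (rmul S P.1) (rmul S m) + rmul S k ↔ _
  rw [hS, ← rmul_add, (rmul_injective S).eq_iff]
  rfl

lemma hallMul_rmul_shear (t : F) {u : F} (hu : u ≠ 0) (x : F × F) {m : F × F}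
    (hm : m.2 ≠ 0) :
    hallMul r s (rmul (shear t u) x) (rmul (shear t u) m)
      = rmul (shear t u) (hallMul r s x m) := by
  have hmu : m.2 * u ≠ 0 := mul_ne_zero hm hu
  simp only [rmul_shear, hallMul, if_neg hm, if_neg hmu, Prod.mk.injEq]
  constructor
  · field_simp
    ring
  · ring

end Hall

theorem TR_ATP_transitive_general {F : Type*} [Field F] [DecidableEq F]
    (r s : F) :
    (∀ m k m' k' : F × F, m.2 ≠ 0 → m'.2 ≠ 0 →
      ∃ g ∈ Subgroup.closure (TRperms F ∪ ATPperms F),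
        ⇑g '' slopeLine r s m k = slopeLine r s m' k') ∧
    (∀ c c' : F × F,
      ∃ g ∈ Subgroup.closure (TRperms F ∪ ATPperms F),
        ⇑g '' vertLine c = vertLine c') := by
  constructor
  · intro m k m' k' hm hm'
    obtain ⟨t, u, hu, rfl⟩ := exists_shear_rmul_eq hm hm'
    let S := Matrix.GeneralLinearGroup.mkOfDetNeZero (shear t u) (by rwa [det_shear])
    refine ⟨tauPerm 0 (k' - rmul S k) * sigmaPerm S,
      mul_mem (tauPerm_mem_closure _ _) (sigmaPerm_mem_closure S), ?_⟩
    rw [Equiv.Perm.coe_mul, Set.image_comp,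
      image_sigmaPerm_slopeLine r s S m k (hallMul_rmul_shear r s t hu · hm),
      image_tauPerm_slopeLine, add_sub_cancel]
    rfl
  · intro c c'
    refine ⟨tauPerm (c' - c) 0, tauPerm_mem_closure _ _, ?_⟩
    rw [image_tauPerm_vertLine, add_sub_cancel]

/-- The group generated by the translations and the autotopisms acts transitively on the
set of type 2 lines and transitively on the set of vertical lines. -/
theorem TR_ATP_transitive {F : Type*} [Field F] [Fintype F] [DecidableEq F]
    (q : ℕ) (hq : Fintype.card F = q) (r s : F)
    (hirr : Irreducible (X ^ 2 - C r * X - C s : F[X])) :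
    (∀ m k m' k' : F × F, m.2 ≠ 0 → m'.2 ≠ 0 →
      ∃ g ∈ Subgroup.closure (TRperms F ∪ ATPperms F),
        ⇑g '' slopeLine r s m k = slopeLine r s m' k') ∧
    (∀ c c' : F × F,
      ∃ g ∈ Subgroup.closure (TRperms F ∪ ATPperms F),
        ⇑g '' vertLine c = vertLine c') :=
  TR_ATP_transitive_general r s
end

section
/- In the Hall affine plane A_H, any two lines of BF lie in the same orbit of the collineation group of A_H, and any two lines of NBF lie in the same orbit of the collineation group of A_H; in particular, the collineation group has at most two orbits on the set of lines. -/
open Polynomial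

/-- The BF lines: vertical lines and type 1 lines (slope in the basefield). -/
def BFlines {F : Type*} [Field F] [DecidableEq F] (r s : F) :
    Set (Set ((F × F) × (F × F))) :=
  {ℓ | (∃ c : F × F, ℓ = vertLine c) ∨ ∃ m k : F × F, m.2 = 0 ∧ ℓ = slopeLine r s m k}

/-- The NBF lines: type 2 lines (slope not in the basefield). -/
def NBFlines {F : Type*} [Field F] [DecidableEq F] (r s : F) :
    Set (Set ((F × F) × (F × F))) :=
  {ℓ | ∃ m k : F × F, m.2 ≠ 0 ∧ ℓ = slopeLine r s m k}

/-! Right multiplication `x ↦ x·m` is `F`-linear on `F × F`: scalar if `m₂ = 0`, and otherwise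
a matrix with characteristic polynomial `f = X ^ 2 - r X - s`; conversely, as `f` has no root
in `F`, every endomorphism annihilated by `f` is such a multiplication. Hence translations and
the maps `(x, y) ↦ (L x, L y)`, `L ∈ GL₂(F)`, are collineations, and `GL₂(F)` moves the slope
`(0, 1)` to any slope outside `F` by a change to the cyclic basis `e, e·m`: every NBF line is
an image of `[(0, 1), 0]`. The maps `(x, y) ↦ ((μ - r) x + y, s x + μ y)` are collineations
too (they commute with the slopes outside `F`), and send `[0]` to `[(μ, 0), 0]`: every BF line
is an image of `[0]`. Finally a collineation of the finite plane permutes the lines, so its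
inverse is again a collineation, and two images of one line lie in the same orbit. -/

open Function Set

lemma sq_sub_mul_sub_ne_zero_of_irreducible {F : Type*} [Field F] {r s : F}
    (hirr : Irreducible (X ^ 2 - C r * X - C s : F[X])) (t : F) : t ^ 2 - r * t - s ≠ 0 := by
  intro ht
  have hroot : IsRoot (X ^ 2 - C r * X - C s : F[X]) t := by simp [ht]
  have hdeg : (X ^ 2 - C r * X - C s : F[X]).degree = 2 := by compute_degree!
  have := degree_eq_one_of_irreducible_of_root hirr hroot
  rw [hdeg] at this
  exact absurd this (by decide)

lemma vertLine_eq_range {F : Type*} (c : F × F) :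
    vertLine c = range fun y : F × F => (c, y) := by
  ext ⟨x, y⟩
  simp [vertLine, eq_comm]

lemma mapsTo_add_vertLine {F : Type*} [Add F] (t : (F × F) × (F × F)) (c : F × F) :
    MapsTo (· + t) (vertLine c) (vertLine (c + t.1)) := by
  rintro P (hP : P.1 = c)
  simp [vertLine, hP]

lemma mapsTo_prodMap_vertLine {F : Type*} (L : F × F → F × F) (c : F × F) :
    MapsTo (Prod.map L L) (vertLine c) (vertLine (L c)) := by
  rintro P (hP : P.1 = c)
  simp [vertLine, hP]

section

variable {F : Type*} [Field F] {r s : F}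

variable (r s) in
/-- On each pair of coordinates this acts by `(μ - r) + C`, with `C` the companion matrix of
`X ^ 2 - r X - s`; by Cayley–Hamilton it commutes with right multiplication by every slope
outside `F`, which it therefore fixes. -/
def hallTorusMap (μ : F) (P : (F × F) × (F × F)) : (F × F) × (F × F) :=
  ((μ - r) • P.1 + P.2, s • P.1 + μ • P.2)

lemma hallTorusMap_injective (hf : ∀ t : F, t ^ 2 - r * t - s ≠ 0) (μ : F) :
    Injective (hallTorusMap r s μ) := by
  rintro ⟨x, y⟩ ⟨x', y'⟩ h
  simp only [hallTorusMap, Prod.mk.injEq] at h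
  have hx : (μ ^ 2 - r * μ - s) • x = (μ ^ 2 - r * μ - s) • x' := by
    linear_combination (norm := module) μ • h.1 - h.2
  obtain rfl := smul_right_injective _ (hf μ) hx
  obtain rfl := add_left_cancel h.1
  rfl

/-- Sends the basis `e, e·(0, 1)` to `e, e·m`, where `e = (1, 0)`; hence it conjugates the
slope `(0, 1)` to the slope `m`. -/
def cyclicMap (m : F × F) : (F × F) →ₗ[F] (F × F) :=
  (LinearMap.fst F F F).smulRight (1, 0) + (LinearMap.snd F F F).smulRight m

@[simp]
lemma cyclicMap_apply (m x : F × F) : cyclicMap m x = x.1 • (1, 0) + x.2 • m := rfl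

lemma cyclicMap_injective {m : F × F} (hm : m.2 ≠ 0) : Injective (cyclicMap m) := by
  refine (injective_iff_map_eq_zero _).2 fun x hx => ?_
  simp only [cyclicMap_apply, Prod.ext_iff, Prod.fst_add, Prod.snd_add, Prod.smul_fst,
    Prod.smul_snd, smul_eq_mul, Prod.fst_zero, Prod.snd_zero] at hx
  have hx₂ : x.2 = 0 := by simpa [hm] using hx.2
  ext <;> simp_all

variable [DecidableEq F]

@[simp]
lemma hallMul_mk_zero (x : F × F) (m₁ : F) : hallMul r s x (m₁, 0) = m₁ • x := by
  ext <;> simp [hallMul, mul_comm]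

lemma hallMul_of_snd_ne_zero {m : F × F} (hm : m.2 ≠ 0) (x : F × F) :
    hallMul r s x m = (x.1 * m.1 - x.2 * m.2⁻¹ * (m.1 ^ 2 - r * m.1 - s),
      x.1 * m.2 - x.2 * m.1 + x.2 * r) := by
  simp [hallMul, hm]

lemma hallMul_add_left (x y m : F × F) :
    hallMul r s (x + y) m = hallMul r s x m + hallMul r s y m := by
  by_cases hm : m.2 = 0 <;> simp only [hallMul, hm, if_true, if_false, Prod.fst_add,
    Prod.snd_add, Prod.mk_add_mk, Prod.ext_iff] <;> constructor <;> ring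

lemma hallMul_smul_left (c : F) (x m : F × F) :
    hallMul r s (c • x) m = c • hallMul r s x m := by
  by_cases hm : m.2 = 0 <;> simp only [hallMul, hm, if_true, if_false, Prod.smul_fst,
    Prod.smul_snd, Prod.smul_mk, smul_eq_mul, Prod.ext_iff] <;> constructor <;> ring

/-- Cayley–Hamilton for the matrix of `x ↦ x·m`, whose characteristic polynomial is
`X ^ 2 - r X - s`. -/
lemma hallMul_hallMul_self {m : F × F} (hm : m.2 ≠ 0) (x : F × F) :
    hallMul r s (hallMul r s x m) m = r • hallMul r s x m + s • x := by
  simp only [hallMul_of_snd_ne_zero hm, Prod.ext_iff, Prod.fst_add, Prod.snd_add,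
    Prod.smul_fst, Prod.smul_snd, smul_eq_mul]
  constructor <;> (field_simp; ring)

variable (r s) in
def hallMulRight (m : F × F) : (F × F) →ₗ[F] (F × F) where
  toFun x := hallMul r s x m
  map_add' x y := hallMul_add_left x y m
  map_smul' c x := hallMul_smul_left c x m

@[simp]
lemma hallMulRight_apply (m x : F × F) : hallMulRight r s m x = hallMul r s x m := rfl

@[simp]
lemma hallMul_zero_left (m : F × F) : hallMul r s 0 m = 0 := (hallMulRight r s m).map_zero

lemma exists_hallMulRight_eq (hf : ∀ t : F, t ^ 2 - r * t - s ≠ 0)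
    (A : (F × F) →ₗ[F] (F × F)) (hA : ∀ x, A (A x) = r • A x + s • x) :
    ∃ m : F × F, A = hallMulRight r s m := by
  obtain ⟨⟨a, b⟩, hu⟩ : ∃ u, A (1, 0) = u := ⟨_, rfl⟩
  obtain ⟨⟨c, d⟩, hw⟩ : ∃ w, A (0, 1) = w := ⟨_, rfl⟩
  have hAx (x : F × F) : A x = (x.1 * a + x.2 * c, x.1 * b + x.2 * d) := by
    conv_lhs => rw [show x = x.1 • (1, 0) + x.2 • (0, 1) by ext <;> simp]
    rw [map_add, map_smul, map_smul, hu, hw]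
    ext <;> simp [mul_comm]
  have h₁ := hA (1, 0)
  simp only [hAx, Prod.ext_iff, Prod.fst_add, Prod.snd_add, Prod.smul_fst, Prod.smul_snd,
    smul_eq_mul] at h₁
  norm_num at h₁
  have hb : b ≠ 0 := fun h => hf a (by subst h; linear_combination h₁.1)
  have htr : a + d = r := mul_left_cancel₀ hb (by linear_combination h₁.2)
  refine ⟨(a, b), LinearMap.ext fun x => ?_⟩
  simp only [hAx, hallMulRight_apply, hallMul_of_snd_ne_zero (m := (a, b)) hb, Prod.ext_iff]
  constructor
  · field_simp
    linear_combination x.2 * h₁.1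
  · linear_combination x.2 * htr

lemma cyclicMap_hallMul {m : F × F} (hm : m.2 ≠ 0) (x : F × F) :
    cyclicMap m (hallMul r s x (0, 1)) = hallMul r s (cyclicMap m x) m := by
  simp only [cyclicMap_apply, hallMul_of_snd_ne_zero hm,
    hallMul_of_snd_ne_zero (show ((0 : F), (1 : F)).2 ≠ 0 from one_ne_zero), Prod.ext_iff,
    Prod.fst_add, Prod.snd_add, Prod.smul_fst, Prod.smul_snd, smul_eq_mul]
  constructor <;> (field_simp; ring)

lemma exists_map_hallMul_eq (hf : ∀ t : F, t ^ 2 - r * t - s ≠ 0)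
    (L : (F × F) ≃ₗ[F] (F × F)) (m : F × F) :
    ∃ m', ∀ x, L (hallMul r s x m) = hallMul r s (L x) m' := by
  by_cases hm : m.2 = 0
  · obtain ⟨m₁, m₂⟩ := m
    obtain rfl : m₂ = 0 := hm
    exact ⟨(m₁, 0), fun x => by simp⟩
  · obtain ⟨m', hm'⟩ := exists_hallMulRight_eq hf
      (L.toLinearMap ∘ₗ hallMulRight r s m ∘ₗ L.symm.toLinearMap)
      (fun x => by simp [hallMul_hallMul_self hm])
    exact ⟨m', fun x => by simpa using LinearMap.congr_fun hm' (L x)⟩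

variable (r s) in
lemma isHallLine_vertLine (c : F × F) : IsHallLine r s (vertLine c) := Or.inl ⟨c, rfl⟩

lemma isHallLine_slopeLine (m k : F × F) : IsHallLine r s (slopeLine r s m k) :=
  Or.inr ⟨m, k, rfl⟩

lemma slopeLine_eq_range (m k : F × F) :
    slopeLine r s m k = range fun x => (x, hallMul r s x m + k) := by
  ext ⟨x, y⟩
  simp [slopeLine, eq_comm]

lemma IsCollineation.comp {φ ψ : (F × F) × (F × F) → (F × F) × (F × F)}
    (hφ : IsCollineation r s φ) (hψ : IsCollineation r s ψ) : IsCollineation r s (φ ∘ ψ) :=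
  ⟨hφ.1.comp hψ.1, fun ℓ hℓ => by rw [image_comp]; exact hφ.2 _ (hψ.2 _ hℓ)⟩

lemma IsHallLine.ncard_eq {ℓ : Set ((F × F) × (F × F))} (h : IsHallLine r s ℓ) :
    ℓ.ncard = Nat.card (F × F) := by
  rcases h with ⟨c, rfl⟩ | ⟨m, k, rfl⟩
  · rw [vertLine_eq_range]
    exact ncard_range_of_injective fun y y' h => (Prod.ext_iff.1 h).2
  · rw [slopeLine_eq_range]
    exact ncard_range_of_injective fun x x' h => (Prod.ext_iff.1 h).1

lemma mapsTo_add_slopeLine (t : (F × F) × (F × F)) (m k : F × F) :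
    MapsTo (· + t) (slopeLine r s m k) (slopeLine r s m (k + t.2 - hallMul r s t.1 m)) := by
  rintro P (hP : P.2 = hallMul r s P.1 m + k)
  simp only [slopeLine, mem_ofPred_eq, Prod.fst_add, Prod.snd_add, hallMul_add_left, hP]
  abel

lemma mapsTo_prodMap_slopeLine (L : (F × F) →ₗ[F] (F × F)) {m m' : F × F}
    (h : ∀ x, L (hallMul r s x m) = hallMul r s (L x) m') (k : F × F) :
    MapsTo (Prod.map L L) (slopeLine r s m k) (slopeLine r s m' (L k)) := by
  rintro P (hP : P.2 = hallMul r s P.1 m + k)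
  simp [slopeLine, hP, h]

lemma mapsTo_hallTorusMap_vertLine (μ : F) (c : F × F) :
    MapsTo (hallTorusMap r s μ) (vertLine c)
      (slopeLine r s (μ, 0) (-(μ ^ 2 - r * μ - s) • c)) := by
  rintro ⟨x, y⟩ (rfl : x = c)
  simp only [hallTorusMap, slopeLine, mem_ofPred_eq, hallMul_mk_zero]
  module

lemma mapsTo_hallTorusMap_slopeLine_mk_zero_of_eq {μ m₁ : F} (hμ : μ - r + m₁ = 0)
    (k : F × F) :
    MapsTo (hallTorusMap r s μ) (slopeLine r s (m₁, 0) k) (vertLine k) := by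
  rintro ⟨x, y⟩ (rfl : y = hallMul r s x (m₁, 0) + k)
  simp only [hallTorusMap, vertLine, mem_ofPred_eq, hallMul_mk_zero]
  linear_combination (norm := module) hμ • x

lemma mapsTo_hallTorusMap_slopeLine_mk_zero_of_ne {μ m₁ : F} (hμ : μ - r + m₁ ≠ 0)
    (k : F × F) :
    MapsTo (hallTorusMap r s μ) (slopeLine r s (m₁, 0) k)
      (slopeLine r s ((s + μ * m₁) / (μ - r + m₁), 0)
        ((μ - (s + μ * m₁) / (μ - r + m₁)) • k)) := by
  rintro ⟨x, y⟩ (rfl : y = hallMul r s x (m₁, 0) + k)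
  simp only [hallTorusMap, slopeLine, mem_ofPred_eq, hallMul_mk_zero]
  have hσ := div_mul_cancel₀ (s + μ * m₁) hμ
  linear_combination (norm := module) -hσ • x

lemma mapsTo_hallTorusMap_slopeLine_of_snd_ne_zero {μ : F} {m : F × F} (hm : m.2 ≠ 0)
    (k : F × F) :
    MapsTo (hallTorusMap r s μ) (slopeLine r s m k)
      (slopeLine r s m (μ • k - hallMul r s k m)) := by
  rintro ⟨x, y⟩ (rfl : y = hallMul r s x m + k)
  simp only [hallTorusMap, slopeLine, mem_ofPred_eq, hallMul_add_left, hallMul_smul_left,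
    hallMul_hallMul_self hm]
  module

variable [Finite F] {ℓ ℓ' : Set ((F × F) × (F × F))}

lemma IsHallLine.image_eq_of_mapsTo {φ : (F × F) × (F × F) → (F × F) × (F × F)}
    (hφ : Injective φ) (hℓ : IsHallLine r s ℓ) (hℓ' : IsHallLine r s ℓ')
    (h : MapsTo φ ℓ ℓ') : φ '' ℓ = ℓ' :=
  eq_of_subset_of_ncard_le h.image_subset
    (by rw [ncard_image_of_injective _ hφ, hℓ.ncard_eq, hℓ'.ncard_eq])

lemma isCollineation_of_mapsTo {φ : (F × F) × (F × F) → (F × F) × (F × F)}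
    (hφ : Injective φ)
    (h : ∀ ℓ, IsHallLine r s ℓ → ∃ ℓ', IsHallLine r s ℓ' ∧ MapsTo φ ℓ ℓ') :
    IsCollineation r s φ := by
  refine ⟨Finite.injective_iff_bijective.1 hφ, fun ℓ hℓ => ?_⟩
  obtain ⟨ℓ', hℓ', hmaps⟩ := h ℓ hℓ
  rwa [hℓ.image_eq_of_mapsTo hφ hℓ' hmaps]

/-- A collineation acts injectively, hence bijectively, on the finitely many lines. -/
lemma IsCollineation.exists_image_eq {φ : (F × F) × (F × F) → (F × F) × (F × F)}
    (hφ : IsCollineation r s φ) (hℓ : IsHallLine r s ℓ) :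
    ∃ ℓ₀, IsHallLine r s ℓ₀ ∧ φ '' ℓ₀ = ℓ := by
  let lines := {ℓ : Set ((F × F) × (F × F)) // IsHallLine r s ℓ}
  let image : lines → lines := fun ℓ => ⟨φ '' ℓ.1, hφ.2 _ ℓ.2⟩
  have himage : Injective image := fun ℓ₁ ℓ₂ h =>
    Subtype.ext (image_injective.2 hφ.1.1 (congrArg Subtype.val h))
  obtain ⟨ℓ₀, hℓ₀⟩ := Finite.injective_iff_surjective.1 himage ⟨ℓ, hℓ⟩
  exact ⟨ℓ₀.1, ℓ₀.2, congrArg Subtype.val hℓ₀⟩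

lemma IsCollineation.symm {φ : (F × F) × (F × F) → (F × F) × (F × F)}
    (hφ : IsCollineation r s φ) : IsCollineation r s (Equiv.ofBijective φ hφ.1).symm := by
  refine ⟨(Equiv.ofBijective φ hφ.1).symm.bijective, fun ℓ hℓ => ?_⟩
  obtain ⟨ℓ₀, hℓ₀, rfl⟩ := hφ.exists_image_eq hℓ
  have : φ '' ℓ₀ = Equiv.ofBijective φ hφ.1 '' ℓ₀ := rfl
  rwa [this, Equiv.symm_image_image]

lemma IsCollineation.exists_image_image_eq {φ ψ : (F × F) × (F × F) → (F × F) × (F × F)}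
    (hφ : IsCollineation r s φ) (hψ : IsCollineation r s ψ) (ℓ₀ : Set ((F × F) × (F × F))) :
    ∃ χ, IsCollineation r s χ ∧ χ '' (φ '' ℓ₀) = ψ '' ℓ₀ := by
  refine ⟨ψ ∘ (Equiv.ofBijective φ hφ.1).symm, hψ.comp hφ.symm, ?_⟩
  rw [image_comp]
  congr 1
  exact Equiv.symm_image_image (Equiv.ofBijective φ hφ.1) ℓ₀

lemma isCollineation_add (t : (F × F) × (F × F)) : IsCollineation r s (· + t) :=
  isCollineation_of_mapsTo (add_left_injective t) fun ℓ => by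
    rintro (⟨c, rfl⟩ | ⟨m, k, rfl⟩)
    exacts [⟨_, isHallLine_vertLine r s _, mapsTo_add_vertLine t c⟩,
      ⟨_, isHallLine_slopeLine _ _, mapsTo_add_slopeLine t m k⟩]

lemma isCollineation_prodMap (hf : ∀ t : F, t ^ 2 - r * t - s ≠ 0)
    (L : (F × F) ≃ₗ[F] (F × F)) : IsCollineation r s (Prod.map L L) :=
  isCollineation_of_mapsTo (L.injective.prodMap L.injective) fun ℓ => by
    rintro (⟨c, rfl⟩ | ⟨m, k, rfl⟩)
    · exact ⟨_, isHallLine_vertLine r s _, mapsTo_prodMap_vertLine L c⟩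
    · obtain ⟨m', hm'⟩ := exists_map_hallMul_eq hf L m
      exact ⟨_, isHallLine_slopeLine _ _, mapsTo_prodMap_slopeLine L.toLinearMap hm' k⟩

lemma isCollineation_hallTorusMap (hf : ∀ t : F, t ^ 2 - r * t - s ≠ 0) (μ : F) :
    IsCollineation r s (hallTorusMap r s μ) :=
  isCollineation_of_mapsTo (hallTorusMap_injective hf μ) fun ℓ => by
    rintro (⟨c, rfl⟩ | ⟨⟨m₁, m₂⟩, k, rfl⟩)
    · exact ⟨_, isHallLine_slopeLine _ _, mapsTo_hallTorusMap_vertLine μ c⟩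
    by_cases hm : m₂ = 0
    · subst hm
      by_cases hμ : μ - r + m₁ = 0
      · exact ⟨_, isHallLine_vertLine r s _,
          mapsTo_hallTorusMap_slopeLine_mk_zero_of_eq hμ k⟩
      · exact ⟨_, isHallLine_slopeLine _ _,
          mapsTo_hallTorusMap_slopeLine_mk_zero_of_ne hμ k⟩
    · exact ⟨_, isHallLine_slopeLine _ _,
        mapsTo_hallTorusMap_slopeLine_of_snd_ne_zero hm k⟩

lemma image_add_slopeLine (m k : F × F) :
    (· + ((0 : F × F), k)) '' slopeLine r s m 0 = slopeLine r s m k :=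
  (isHallLine_slopeLine m 0).image_eq_of_mapsTo (add_left_injective _)
    (isHallLine_slopeLine m k) (by simpa using mapsTo_add_slopeLine ((0 : F × F), k) m 0)

lemma exists_collineation_image_vertLine_zero (hf : ∀ t : F, t ^ 2 - r * t - s ≠ 0)
    {ℓ : Set ((F × F) × (F × F))} (hℓ : ℓ ∈ BFlines r s) :
    ∃ φ, IsCollineation r s φ ∧ φ '' vertLine 0 = ℓ := by
  rcases hℓ with ⟨c, rfl⟩ | ⟨⟨μ, m₂⟩, k, rfl : m₂ = 0, rfl⟩
  · refine ⟨(· + (c, 0)), isCollineation_add _, ?_⟩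
    exact (isHallLine_vertLine r s 0).image_eq_of_mapsTo (add_left_injective _)
      (isHallLine_vertLine r s c) (by simpa using mapsTo_add_vertLine (c, (0 : F × F)) 0)
  · refine ⟨(· + (0, k)) ∘ hallTorusMap r s μ,
      (isCollineation_add _).comp (isCollineation_hallTorusMap hf μ), ?_⟩
    rw [image_comp, ← image_add_slopeLine (μ, 0) k]
    congr 1
    exact (isHallLine_vertLine r s 0).image_eq_of_mapsTo (hallTorusMap_injective hf μ)
      (isHallLine_slopeLine _ _)
      (by simpa using mapsTo_hallTorusMap_vertLine (r := r) (s := s) μ 0)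

lemma exists_collineation_image_slopeLine_zero_one (hf : ∀ t : F, t ^ 2 - r * t - s ≠ 0)
    {ℓ : Set ((F × F) × (F × F))} (hℓ : ℓ ∈ NBFlines r s) :
    ∃ φ, IsCollineation r s φ ∧ φ '' slopeLine r s (0, 1) 0 = ℓ := by
  obtain ⟨m, k, hm, rfl⟩ := hℓ
  let L := LinearEquiv.ofInjectiveEndo (cyclicMap m) (cyclicMap_injective hm)
  refine ⟨(· + (0, k)) ∘ Prod.map L L,
    (isCollineation_add _).comp (isCollineation_prodMap hf L), ?_⟩
  rw [image_comp, ← image_add_slopeLine m k]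
  congr 1
  exact (isHallLine_slopeLine _ _).image_eq_of_mapsTo (L.injective.prodMap L.injective)
    (isHallLine_slopeLine _ _)
    (by simpa using mapsTo_prodMap_slopeLine L.toLinearMap (cyclicMap_hallMul hm) 0)

end

theorem two_line_orbits_general {F : Type*} [Field F] [Fintype F] [DecidableEq F]
    (r s : F)
    (hirr : Irreducible (X ^ 2 - C r * X - C s : F[X])) :
    (∀ ℓ ℓ' : Set ((F × F) × (F × F)), ℓ ∈ BFlines r s → ℓ' ∈ BFlines r s →
      ∃ φ, IsCollineation r s φ ∧ φ '' ℓ = ℓ') ∧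
    (∀ ℓ ℓ' : Set ((F × F) × (F × F)), ℓ ∈ NBFlines r s → ℓ' ∈ NBFlines r s →
      ∃ φ, IsCollineation r s φ ∧ φ '' ℓ = ℓ') ∧
    (∀ ℓ, IsHallLine r s ℓ → ℓ ∈ BFlines r s ∨ ℓ ∈ NBFlines r s) := by
  have hf := sq_sub_mul_sub_ne_zero_of_irreducible hirr
  refine ⟨fun ℓ ℓ' hℓ hℓ' => ?_, fun ℓ ℓ' hℓ hℓ' => ?_, ?_⟩
  · obtain ⟨φ, hφ, rfl⟩ := exists_collineation_image_vertLine_zero hf hℓ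
    obtain ⟨ψ, hψ, rfl⟩ := exists_collineation_image_vertLine_zero hf hℓ'
    exact hφ.exists_image_image_eq hψ _
  · obtain ⟨φ, hφ, rfl⟩ := exists_collineation_image_slopeLine_zero_one hf hℓ
    obtain ⟨ψ, hψ, rfl⟩ := exists_collineation_image_slopeLine_zero_one hf hℓ'
    exact hφ.exists_image_image_eq hψ _
  · rintro ℓ (⟨c, rfl⟩ | ⟨m, k, rfl⟩)
    · exact Or.inl (Or.inl ⟨c, rfl⟩)
    by_cases hm : m.2 = 0
    exacts [Or.inl (Or.inr ⟨m, k, hm, rfl⟩), Or.inr ⟨m, k, hm, rfl⟩]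

/-- Any two BF lines lie in the same orbit of the collineation group of the Hall affine
plane, and any two NBF lines lie in the same orbit; since every line is a BF line or an
NBF line, the collineation group has at most two orbits on lines. -/
theorem two_line_orbits {F : Type*} [Field F] [Fintype F] [DecidableEq F]
    (q : ℕ) (hq : Fintype.card F = q) (r s : F)
    (hirr : Irreducible (X ^ 2 - C r * X - C s : F[X])) :
    (∀ ℓ ℓ' : Set ((F × F) × (F × F)), ℓ ∈ BFlines r s → ℓ' ∈ BFlines r s →
      ∃ φ, IsCollineation r s φ ∧ φ '' ℓ = ℓ') ∧
    (∀ ℓ ℓ' : Set ((F × F) × (F × F)), ℓ ∈ NBFlines r s → ℓ' ∈ NBFlines r s →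
      ∃ φ, IsCollineation r s φ ∧ φ '' ℓ = ℓ') ∧
    (∀ ℓ, IsHallLine r s ℓ → ℓ ∈ BFlines r s ∨ ℓ ∈ NBFlines r s) :=
  two_line_orbits_general r s hirr
end
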